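/- A finitely generated group G with more than one end (i.e., a Cayley graph of G with respect to a finite generating set has more than one end) has a non-trivial action on a tree with finite edge stabilizers. -/

import Mathlib

open Set

universe u

def cobound {V : Type*} (G : SimpleGraph V) (A : Set V) : Set (Sym2 V) :=
  {e | e ∈ G.edgeSet ∧ ∃ u v, e = s(u, v) ∧ u ∈ A ∧ v ∉ A}

def IsCut {V : Type*} (G : SimpleGraph V) (A : Set V) : Prop := (cobound G A).Finite

structure IsRay {V : Type*} (G : SimpleGraph V) (r : ℕ → V) : Prop where
  inj : Function.Injective r
  adj : ∀ n, G.Adj (r n) (r (n + 1))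

/-- The Cayley graph of `G` with respect to a finite generating set `S`. -/
def cayley {G : Type u} [Group G] (S : Finset G) : SimpleGraph G where
  Adj x y := x ≠ y ∧ ∃ s ∈ S, y = x * s ∨ x = y * s
  symm := by
    constructor
    rintro x y ⟨h, s, hs, h2⟩
    exact ⟨h.symm, s, hs, h2.symm⟩
  loopless := ⟨fun x h => h.1 rfl⟩

/-!
Dunwoody's structure tree. Since `Γ = cayley S` has two ends, there are sets `A` with finite
coboundary `δA` and with `A`, `Aᶜ` infinite; those with `|δA|` as small as possible are the
minimal cuts. A minimal cut and its complement are connected, so by compactness only finitely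
many minimal cuts separate two given vertices, and each minimal cut crosses only finitely many
others. Choose the optimal cuts, crossing as few minimal cuts as possible. If two optimal cuts
`C`, `D` crossed, submodularity of `|δ|` would make two opposite corners, say `C ∩ D` and
`Cᶜ ∩ Dᶜ`, minimal cuts crossing strictly fewer minimal cuts in total than `C` and `D`. So the
optimal cuts form a nested family, closed under complements and under left translation, with
finite intervals, and such a family is the edge set of a tree. An element fixing an edge `C`
maps an edge of `δC` into the finite set `δC`, so edge stabilizers are finite; a vertex fixed
by all of `G` would make every translate of some optimal cut `C` equal to or disjoint from
`C`, putting the infinite set `C` inside one orbit of its finite stabilizer.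
-/

open Pointwise

variable {V : Type*} {Γ : SimpleGraph V} {A B C D F : Set V} {a b u v x y : V}

section Coboundary

theorem mem_cobound :
    s(u, v) ∈ cobound Γ A ↔ Γ.Adj u v ∧ (u ∈ A ∧ v ∉ A ∨ v ∈ A ∧ u ∉ A) := by
  constructor
  · rintro ⟨he, a, b, hab, ha, hb⟩
    refine ⟨he, ?_⟩
    rcases Sym2.eq_iff.mp hab with ⟨rfl, rfl⟩ | ⟨rfl, rfl⟩
    exacts [.inl ⟨ha, hb⟩, .inr ⟨ha, hb⟩]
  · rintro ⟨hadj, ⟨hu, hv⟩ | ⟨hv, hu⟩⟩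
    · exact ⟨hadj, u, v, rfl, hu, hv⟩
    · exact ⟨hadj, v, u, Sym2.eq_swap, hv, hu⟩

theorem mk_mem_cobound (h : Γ.Adj u v) (hu : u ∈ A) (hv : v ∉ A) : s(u, v) ∈ cobound Γ A :=
  ⟨h, u, v, rfl, hu, hv⟩

theorem mk_notMem_cobound (hu : u ∈ A) (hv : v ∈ A) : s(u, v) ∉ cobound Γ A := by
  rw [mem_cobound]
  tauto

theorem cobound_compl (A : Set V) : cobound Γ Aᶜ = cobound Γ A := by
  ext e
  induction e using Sym2.ind with
  | h u v => simp only [mem_cobound, mem_compl_iff, not_not]; tauto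

theorem cobound_inter_subset (A B : Set V) :
    cobound Γ (A ∩ B) ⊆ cobound Γ A ∪ cobound Γ B := by
  intro e
  induction e using Sym2.ind with
  | h u v => simp only [mem_union, mem_cobound, mem_inter_iff]; tauto

theorem cobound_union_subset (A B : Set V) :
    cobound Γ (A ∪ B) ⊆ cobound Γ A ∪ cobound Γ B := by
  intro e
  induction e using Sym2.ind with
  | h u v => simp only [mem_union, mem_cobound]; tauto

theorem cobound_inter_inter_cobound_union_subset (A B : Set V) :
    cobound Γ (A ∩ B) ∩ cobound Γ (A ∪ B) ⊆ cobound Γ A ∩ cobound Γ B := by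
  intro e
  induction e using Sym2.ind with
  | h u v => simp only [mem_inter_iff, mem_union, mem_cobound]; tauto

theorem IsCut.compl (hA : IsCut Γ A) : IsCut Γ Aᶜ := by
  rwa [IsCut, cobound_compl]

theorem IsCut.inter (hA : IsCut Γ A) (hB : IsCut Γ B) : IsCut Γ (A ∩ B) :=
  (Set.Finite.union hA hB).subset (cobound_inter_subset A B)

theorem IsCut.union (hA : IsCut Γ A) (hB : IsCut Γ B) : IsCut Γ (A ∪ B) :=
  (Set.Finite.union hA hB).subset (cobound_union_subset A B)

theorem ncard_cobound_inter_add_ncard_cobound_union_le (hA : IsCut Γ A) (hB : IsCut Γ B) :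
    (cobound Γ (A ∩ B)).ncard + (cobound Γ (A ∪ B)).ncard ≤
      (cobound Γ A).ncard + (cobound Γ B).ncard := by
  rw [← ncard_union_add_ncard_inter _ _ (hA.inter hB) (hA.union hB),
    ← ncard_union_add_ncard_inter _ _ hA hB]
  apply add_le_add
  · exact ncard_le_ncard (union_subset (cobound_inter_subset A B) (cobound_union_subset A B))
      (Set.Finite.union hA hB)
  · exact ncard_le_ncard (cobound_inter_inter_cobound_union_subset A B) (hA.inter_of_left _)

def endpoints (E : Set (Sym2 V)) : Set V := {v | ∃ e ∈ E, v ∈ e}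

theorem finite_endpoints {E : Set (Sym2 V)} (hE : E.Finite) : (endpoints E).Finite := by
  have : endpoints E = ⋃ e ∈ E, {v | v ∈ e} := by ext; simp [endpoints]
  rw [this]
  refine hE.biUnion fun e _ => ?_
  induction e using Sym2.ind with
  | h a b => exact (toFinite {a, b}).subset fun v => by simp [Sym2.mem_iff]

end Coboundary

section Connectivity

def ReachableIn (Γ : SimpleGraph V) (A : Set V) : V → V → Prop :=
  Relation.ReflTransGen fun x y => Γ.Adj x y ∧ x ∈ A ∧ y ∈ A

def IsConnectedIn (Γ : SimpleGraph V) (A : Set V) : Prop :=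
  ∀ ⦃x⦄, x ∈ A → ∀ ⦃y⦄, y ∈ A → ReachableIn Γ A x y

def componentIn (Γ : SimpleGraph V) (A : Set V) (a : V) : Set V := {v | ReachableIn Γ A a v}

theorem ReachableIn.symm (h : ReachableIn Γ A x y) : ReachableIn Γ A y x := by
  induction h with
  | refl => exact .refl
  | tail _ hstep ih => exact ih.head ⟨hstep.1.symm, hstep.2.2, hstep.2.1⟩

theorem ReachableIn.mem (h : ReachableIn Γ A x y) (hx : x ∈ A) : y ∈ A := by
  induction h with
  | refl => exact hx
  | tail _ hstep _ => exact hstep.2.2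

theorem ReachableIn.exists_adj_mem_notMem (h : ReachableIn Γ B x y) (hx : x ∈ A) (hy : y ∉ A) :
    ∃ u v, Γ.Adj u v ∧ u ∈ B ∧ v ∈ B ∧ u ∈ A ∧ v ∉ A := by
  induction h with
  | refl => exact absurd hx hy
  | @tail b c _ hstep ih =>
    by_cases hb : b ∈ A
    · exact ⟨b, c, hstep.1, hstep.2.1, hstep.2.2, hb, hy⟩
    · exact ih hb

theorem SimpleGraph.Reachable.reachableIn_univ (h : Γ.Reachable x y) : ReachableIn Γ univ x y := by
  rw [SimpleGraph.reachable_iff_reflTransGen] at h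
  induction h with
  | refl => exact .refl
  | tail _ hadj ih => exact ih.tail ⟨hadj, trivial, trivial⟩

theorem cobound_nonempty (hΓ : Γ.Preconnected) (hA : A.Nonempty) (hA' : Aᶜ.Nonempty) :
    (cobound Γ A).Nonempty := by
  obtain ⟨x, hx⟩ := hA
  obtain ⟨y, hy⟩ := hA'
  obtain ⟨u, v, huv, -, -, hu, hv⟩ := (hΓ x y).reachableIn_univ.exists_adj_mem_notMem hx hy
  exact ⟨s(u, v), mk_mem_cobound huv hu hv⟩

theorem mem_componentIn_self (A : Set V) (a : V) : a ∈ componentIn Γ A a :=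
  Relation.ReflTransGen.refl

theorem componentIn_subset (ha : a ∈ A) : componentIn Γ A a ⊆ A :=
  fun _ hv => ReachableIn.mem hv ha

theorem componentIn_eq_of_mem (hb : b ∈ componentIn Γ A a) :
    componentIn Γ A b = componentIn Γ A a :=
  ext fun _ => ⟨hb.trans, (ReachableIn.symm hb).trans⟩

theorem cobound_componentIn_subset (ha : a ∈ A) :
    cobound Γ (componentIn Γ A a) ⊆ cobound Γ A := by
  have leaves : ∀ p q, Γ.Adj p q → p ∈ componentIn Γ A a → q ∉ componentIn Γ A a →
      p ∈ A ∧ q ∉ A := fun p q hpq hp hq =>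
    ⟨componentIn_subset ha hp, fun hqA => hq (hp.tail ⟨hpq, componentIn_subset ha hp, hqA⟩)⟩
  intro e
  induction e using Sym2.ind with
  | h u v =>
    rw [mem_cobound, mem_cobound]
    rintro ⟨huv, ⟨hu, hv⟩ | ⟨hv, hu⟩⟩
    exacts [⟨huv, .inl (leaves u v huv hu hv)⟩, ⟨huv, .inr (leaves v u huv.symm hv hu)⟩]

theorem exists_mem_endpoints_mem_componentIn (hΓ : Γ.Preconnected) (hA' : Aᶜ.Nonempty)
    (ha : a ∈ A) : ∃ u ∈ endpoints (cobound Γ A) ∩ A, u ∈ componentIn Γ A a := by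
  have hout : (componentIn Γ A a)ᶜ.Nonempty :=
    hA'.mono (compl_subset_compl.mpr (componentIn_subset ha))
  obtain ⟨e, he⟩ := cobound_nonempty hΓ ⟨a, mem_componentIn_self A a⟩ hout
  have heA := cobound_componentIn_subset ha he
  obtain ⟨-, p, q, rfl, hp, -⟩ := he
  exact ⟨p, ⟨⟨s(p, q), heA, Sym2.mem_mk_left p q⟩, componentIn_subset ha hp⟩, hp⟩

theorem exists_infinite_componentIn (hΓ : Γ.Preconnected) (hAcut : IsCut Γ A) (hA : A.Infinite)
    (hA' : Aᶜ.Nonempty) : ∃ a ∈ A, (componentIn Γ A a).Infinite := by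
  by_contra! hfin
  have hcover : A ⊆ ⋃ u ∈ endpoints (cobound Γ A) ∩ A, componentIn Γ A u := fun a ha => by
    obtain ⟨u, hu, hau⟩ := exists_mem_endpoints_mem_componentIn hΓ hA' ha
    exact mem_biUnion hu (ReachableIn.symm hau)
  exact hA ((((finite_endpoints hAcut).inter_of_left A).biUnion fun u hu => hfin u hu.2).subset
    hcover)

end Connectivity

section MinimalCuts

def IsEndCut (Γ : SimpleGraph V) (A : Set V) : Prop := IsCut Γ A ∧ A.Infinite ∧ Aᶜ.Infinite

noncomputable def minCutSize (Γ : SimpleGraph V) : ℕ :=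
  sInf ((fun A => (cobound Γ A).ncard) '' {A | IsEndCut Γ A})

def IsMinCut (Γ : SimpleGraph V) (A : Set V) : Prop :=
  IsEndCut Γ A ∧ (cobound Γ A).ncard = minCutSize Γ

theorem IsEndCut.compl (h : IsEndCut Γ A) : IsEndCut Γ Aᶜ :=
  ⟨h.1.compl, h.2.2, by rw [compl_compl]; exact h.2.1⟩

theorem IsMinCut.compl (h : IsMinCut Γ A) : IsMinCut Γ Aᶜ :=
  ⟨h.1.compl, by rw [cobound_compl]; exact h.2⟩

theorem minCutSize_le (h : IsEndCut Γ A) : minCutSize Γ ≤ (cobound Γ A).ncard :=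
  Nat.sInf_le ⟨A, h, rfl⟩

theorem exists_isMinCut (h : IsEndCut Γ A) : ∃ B, IsMinCut Γ B := by
  obtain ⟨B, hB, hBk⟩ := Nat.sInf_mem (⟨_, A, h, rfl⟩ :
    ((fun A => (cobound Γ A).ncard) '' {A | IsEndCut Γ A}).Nonempty)
  exact ⟨B, hB, hBk⟩

/-- The coboundary of an infinite component of a minimal cut `A` is contained in that of `A`,
so by minimality it is all of it; then every other component would have no edge leaving it. -/
theorem IsMinCut.isConnectedIn (hΓ : Γ.Preconnected) (h : IsMinCut Γ A) : IsConnectedIn Γ A := by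
  obtain ⟨⟨hAcut, hAinf, hAcinf⟩, hAk⟩ := h
  obtain ⟨a, haA, hUinf⟩ := exists_infinite_componentIn hΓ hAcut hAinf hAcinf.nonempty
  set U := componentIn Γ A a
  have hUA : U ⊆ A := componentIn_subset haA
  have hU : IsEndCut Γ U := ⟨hAcut.subset (cobound_componentIn_subset haA), hUinf,
    hAcinf.mono (compl_subset_compl.mpr hUA)⟩
  have hδ : cobound Γ U = cobound Γ A :=
    eq_of_subset_of_ncard_le (cobound_componentIn_subset haA) (hAk ▸ minCutSize_le hU) hAcut
  have hAU : A ⊆ U := by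
    intro y hy
    obtain ⟨u, ⟨⟨e, he, hue⟩, huA⟩, hyu⟩ :=
      exists_mem_endpoints_mem_componentIn hΓ hAcinf.nonempty hy
    have heU : e ∈ cobound Γ U := hδ ▸ he
    obtain ⟨-, p, q, rfl, hp, hq⟩ := heU
    have huU : u ∈ U := by
      rcases Sym2.mem_iff.mp hue with rfl | rfl
      · exact hp
      · exact absurd he (mk_notMem_cobound (hUA hp) huA)
    show y ∈ componentIn Γ A a
    rw [← componentIn_eq_of_mem huU]
    exact ReachableIn.symm hyu
  exact fun x hx y hy => (ReachableIn.symm (hAU hx)).trans (hAU hy)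

theorem IsMinCut.inter_and_union (hC : IsMinCut Γ C) (hD : IsMinCut Γ D)
    (hCD : (C ∩ D).Infinite) (hCD' : (Cᶜ ∩ Dᶜ).Infinite) :
    IsMinCut Γ (C ∩ D) ∧ IsMinCut Γ (C ∪ D) := by
  have hinter : IsEndCut Γ (C ∩ D) := ⟨hC.1.1.inter hD.1.1, hCD,
    hC.1.2.2.mono (compl_subset_compl.mpr inter_subset_left)⟩
  have hunion : IsEndCut Γ (C ∪ D) := ⟨hC.1.1.union hD.1.1,
    hC.1.2.1.mono subset_union_left, by rwa [compl_union]⟩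
  have := ncard_cobound_inter_add_ncard_cobound_union_le hC.1.1 hD.1.1
  have := minCutSize_le hinter
  have := minCutSize_le hunion
  have := hC.2
  have := hD.2
  exact ⟨⟨hinter, by omega⟩, ⟨hunion, by omega⟩⟩

theorem IsConnectedIn.subset_of_cobound_eq (hC : IsConnectedIn Γ C)
    (h : cobound Γ C = cobound Γ D) (haC : a ∈ C) (haD : a ∈ D) : C ⊆ D := by
  intro x hx
  by_contra hxD
  obtain ⟨u, v, huv, huC, hvC, huD, hvD⟩ := (hC haC hx).exists_adj_mem_notMem haD hxD
  exact mk_notMem_cobound huC hvC (h ▸ mk_mem_cobound huv huD hvD)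

theorem IsConnectedIn.eq_of_cobound_eq (hC : IsConnectedIn Γ C) (hD : IsConnectedIn Γ D)
    (h : cobound Γ C = cobound Γ D) (haC : a ∈ C) (haD : a ∈ D) : C = D :=
  (hC.subset_of_cobound_eq h haC haD).antisymm (hD.subset_of_cobound_eq h.symm haD haC)

end MinimalCuts

section Compactness

open Filter

variable {ι : Type*} {𝒰 : Ultrafilter ι} {D : ι → Set V}

theorem compl_liminf_ultrafilter : (liminf D 𝒰)ᶜ = liminf (fun i => (D i)ᶜ) 𝒰 := by
  ext v
  simp only [mem_compl_iff, mem_liminf_iff_eventually_mem, Ultrafilter.eventually_not]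

theorem eventually_forall_mem_iff_mem_liminf {N : Set V} (hN : N.Finite) :
    ∀ᶠ i in 𝒰, ∀ v ∈ N, (v ∈ D i ↔ v ∈ liminf D 𝒰) := by
  refine hN.eventually_all.mpr fun v _ => ?_
  by_cases hv : v ∈ liminf D 𝒰
  · filter_upwards [mem_liminf_iff_eventually_mem.mp hv] with i hi using iff_of_true hi hv
  · have hv' : v ∈ liminf (fun i => (D i)ᶜ) 𝒰 := compl_liminf_ultrafilter ▸ hv
    filter_upwards [mem_liminf_iff_eventually_mem.mp hv'] with i hi using iff_of_false hi hv

theorem eventually_subset_cobound {E : Set (Sym2 V)} (hE : E.Finite)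
    (hsub : E ⊆ cobound Γ (liminf D 𝒰)) : ∀ᶠ i in 𝒰, E ⊆ cobound Γ (D i) := by
  filter_upwards [eventually_forall_mem_iff_mem_liminf (D := D) (𝒰 := 𝒰) (finite_endpoints hE)]
    with i hi e he
  obtain ⟨hadj, u, v, rfl, hu, hv⟩ := hsub he
  exact mk_mem_cobound hadj ((hi u ⟨_, he, Sym2.mem_mk_left u v⟩).mpr hu)
    (mt (hi v ⟨_, he, Sym2.mem_mk_right u v⟩).mp hv)

theorem isCut_liminf_and_ncard_le {k : ℕ} (hD : ∀ i, IsCut Γ (D i) ∧ (cobound Γ (D i)).ncard ≤ k) :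
    IsCut Γ (liminf D 𝒰) ∧ (cobound Γ (liminf D 𝒰)).ncard ≤ k := by
  have hsmall : ∀ E ⊆ cobound Γ (liminf D 𝒰), E.Finite → E.ncard ≤ k := fun E hsub hE => by
    obtain ⟨i, hi⟩ := (eventually_subset_cobound hE hsub).exists
    exact (ncard_le_ncard hi (hD i).1).trans (hD i).2
  have hfin : IsCut Γ (liminf D 𝒰) := by
    by_contra hinf
    obtain ⟨E, hsub, hE, hEk⟩ := Set.Infinite.exists_subset_ncard_eq hinf (k + 1)
    have := hsmall E hsub hE
    omega
  exact ⟨hfin, hsmall _ subset_rfl hfin⟩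

/-- Otherwise the sets eventually agree with the limit on its finite neighbourhood, and a path
inside one of them from `a` to a vertex outside that neighbourhood would leave the limit
through it. -/
theorem infinite_liminf [Γ.LocallyFinite] (hD : ∀ i, (D i).Infinite ∧ IsConnectedIn Γ (D i))
    (ha : ∀ i, a ∈ D i) : (liminf D 𝒰).Infinite := by
  intro hfin
  set N := liminf D 𝒰 ∪ ⋃ u ∈ liminf D 𝒰, Γ.neighborSet u
  have hN : N.Finite := hfin.union (hfin.biUnion fun u _ => (Γ.neighborSet u).toFinite)
  obtain ⟨i, hi⟩ := (eventually_forall_mem_iff_mem_liminf (D := D) (𝒰 := 𝒰) hN).exists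
  obtain ⟨w, hwD, hwN⟩ := ((hD i).1.sdiff hN).nonempty
  have haL : a ∈ liminf D 𝒰 := mem_liminf_iff_eventually_mem.mpr (.of_forall ha)
  obtain ⟨u, v, huv, -, hvD, huL, hvL⟩ :=
    ((hD i).2 (ha i) hwD).exists_adj_mem_notMem haL fun hw => hwN (.inl hw)
  have hvN : v ∈ N := .inr (mem_biUnion huL huv)
  exact hvL ((hi v hvN).mp hvD)

/-- An infinite family of such cuts converges along a free ultrafilter to a minimal cut `L`;
eventually the members share the coboundary of `L` and the vertex `a` with it, hence
coincide with `L`. -/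
theorem finite_setOf_isMinCut_mem_notMem (hΓ : Γ.Preconnected) [Γ.LocallyFinite] (a b : V) :
    {D | IsMinCut Γ D ∧ a ∈ D ∧ b ∉ D}.Finite := by
  by_contra hinf
  set 𝒟 := {D | IsMinCut Γ D ∧ a ∈ D ∧ b ∉ D}
  have : Infinite 𝒟 := Set.infinite_coe_iff.mpr hinf
  set 𝒰 := hyperfilter 𝒟
  set L := liminf (Subtype.val : 𝒟 → Set V) 𝒰
  have hL : IsCut Γ L ∧ (cobound Γ L).ncard ≤ minCutSize Γ :=
    isCut_liminf_and_ncard_le fun D => ⟨D.2.1.1.1, D.2.1.2.le⟩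
  have hLinf : L.Infinite :=
    infinite_liminf (fun D => ⟨D.2.1.1.2.1, D.2.1.isConnectedIn hΓ⟩) fun D => D.2.2.1
  have hLcinf : Lᶜ.Infinite := by
    rw [compl_liminf_ultrafilter]
    exact infinite_liminf (fun D => ⟨D.2.1.1.2.2, D.2.1.compl.isConnectedIn hΓ⟩)
      fun D => D.2.2.2
  have hLmin : IsMinCut Γ L :=
    ⟨⟨hL.1, hLinf, hLcinf⟩, hL.2.antisymm (minCutSize_le ⟨hL.1, hLinf, hLcinf⟩)⟩
  have haL : a ∈ L := mem_liminf_iff_eventually_mem.mpr (.of_forall fun D => D.2.2.1)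
  have hev : ∀ᶠ D : 𝒟 in 𝒰, (D : Set V) = L := by
    filter_upwards [eventually_subset_cobound hL.1 subset_rfl] with D hD
    have hδ : cobound Γ L = cobound Γ D :=
      eq_of_subset_of_ncard_le hD (by rw [D.2.1.2, hLmin.2]) D.2.1.1.1
    exact (D.2.1.isConnectedIn hΓ).eq_of_cobound_eq (hLmin.isConnectedIn hΓ) hδ.symm D.2.2.1 haL
  exact notMem_hyperfilter_of_finite
    (Subsingleton.finite fun D hD D' hD' => Subtype.ext (hD.trans hD'.symm)) hev

end Compactness

section Nested

/-- The four disjuncts say that one of the corners `A ∩ B`, `A ∩ Bᶜ`, `Aᶜ ∩ B`, `Aᶜ ∩ Bᶜ`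
is empty. -/
def Nested (A B : Set V) : Prop := A ⊆ Bᶜ ∨ A ⊆ B ∨ B ⊆ A ∨ Bᶜ ⊆ A

theorem not_nested_iff : ¬ Nested A B ↔ (A ∩ B).Nonempty ∧ (A ∩ Bᶜ).Nonempty ∧
    (Aᶜ ∩ B).Nonempty ∧ (Aᶜ ∩ Bᶜ).Nonempty := by
  simp only [Nested, not_or, not_subset, inter_nonempty, mem_compl_iff, not_not]
  tauto

theorem Nested.refl (A : Set V) : Nested A A := .inr (.inl subset_rfl)

theorem Nested.symm (h : Nested A B) : Nested B A := by
  rcases h with h | h | h | h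
  exacts [.inl (subset_compl_comm.mp h), .inr (.inr (.inl h)), .inr (.inl h),
    .inr (.inr (.inr (compl_subset_comm.mp h)))]

theorem Nested.compl_left (h : Nested A B) : Nested Aᶜ B := by
  rcases h with h | h | h | h
  exacts [.inr (.inr (.inl (subset_compl_comm.mp h))),
    .inr (.inr (.inr (compl_subset_compl.mpr h))),
    .inl (compl_subset_compl.mpr h), .inr (.inl (compl_subset_comm.mp h))]

theorem Nested.compl_right (h : Nested A B) : Nested A Bᶜ :=
  h.symm.compl_left.symm

theorem nested_compl_left_iff : Nested Aᶜ B ↔ Nested A B :=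
  ⟨fun h => compl_compl A ▸ h.compl_left, Nested.compl_left⟩

theorem nested_compl_right_iff : Nested A Bᶜ ↔ Nested A B :=
  ⟨fun h => compl_compl B ▸ h.compl_right, Nested.compl_right⟩

theorem Nested.inter_of_not_nested (hCD : ¬ Nested C D) (hCF : Nested C A) (hDF : Nested D A) :
    Nested (C ∩ D) A := by
  obtain ⟨-, -, ⟨x, hxC, hxD⟩, ⟨y, hyC, hyD⟩⟩ := not_nested_iff.mp hCD
  rcases hCF with h | h | h | h
  · exact .inl (inter_subset_left.trans h)
  · exact .inr (.inl (inter_subset_left.trans h))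
  all_goals rcases hDF with h' | h' | h' | h'
  · exact .inl (inter_subset_right.trans h')
  · exact .inr (.inl (inter_subset_right.trans h'))
  · exact .inr (.inr (.inl (subset_inter h h')))
  · exact absurd (h' fun hyA => hyC (h hyA)) hyD
  · exact absurd (h (h' hxD)) hxC
  · exact .inr (.inl (inter_subset_right.trans h'))
  · exact absurd (h fun hyA => hyD (h' hyA)) hyC
  · exact .inr (.inr (.inr (subset_inter h h')))

theorem Nested.inter_or_compl_inter (h : Nested C A) (D : Set V) :
    Nested (C ∩ D) A ∨ Nested (Cᶜ ∩ Dᶜ) A := by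
  rcases h with h | h | h | h
  · exact .inl (.inl (inter_subset_left.trans h))
  · exact .inl (.inr (.inl (inter_subset_left.trans h)))
  · exact .inr (.inl fun x hx hxA => hx.1 (h hxA))
  · exact .inr (.inr (.inl fun x hx => by_contra fun hxA => hx.1 (h hxA)))

theorem infinite_inter_or_infinite_inter_compl (hA : A.Infinite) (B : Set V) :
    (A ∩ B).Infinite ∨ (A ∩ Bᶜ).Infinite := by
  rw [← infinite_union, ← sdiff_eq, inter_union_sdiff]
  exact hA

theorem infinite_opposite_corners (hC : C.Infinite) (hC' : Cᶜ.Infinite) (hD : D.Infinite)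
    (hD' : Dᶜ.Infinite) : (C ∩ D).Infinite ∧ (Cᶜ ∩ Dᶜ).Infinite ∨
      (C ∩ Dᶜ).Infinite ∧ (Cᶜ ∩ D).Infinite := by
  have h1 := infinite_inter_or_infinite_inter_compl hC D
  have h2 := infinite_inter_or_infinite_inter_compl hC' D
  have h3 := infinite_inter_or_infinite_inter_compl hD C
  have h4 := infinite_inter_or_infinite_inter_compl hD' C
  rw [inter_comm D, inter_comm D] at h3
  rw [inter_comm Dᶜ, inter_comm Dᶜ] at h4
  by_contra! h
  tauto

end Nested

section OptimalCuts

def crossingCuts (Γ : SimpleGraph V) (A : Set V) : Set (Set V) :=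
  {B | IsMinCut Γ B ∧ ¬ Nested A B}

/-- `ncard` is `0` on infinite sets; for minimal cuts the family is finite
(`finite_crossingCuts`). -/
noncomputable def crossingNumber (Γ : SimpleGraph V) (A : Set V) : ℕ :=
  (crossingCuts Γ A).ncard

def IsOptimalCut (Γ : SimpleGraph V) (A : Set V) : Prop :=
  IsMinCut Γ A ∧ ∀ B, IsMinCut Γ B → crossingNumber Γ A ≤ crossingNumber Γ B

theorem crossingCuts_compl (A : Set V) : crossingCuts Γ Aᶜ = crossingCuts Γ A := by
  simp only [crossingCuts, nested_compl_left_iff]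

theorem IsOptimalCut.compl (h : IsOptimalCut Γ A) : IsOptimalCut Γ Aᶜ :=
  ⟨h.1.compl, by simpa only [crossingNumber, crossingCuts_compl] using h.2⟩

theorem exists_isOptimalCut (h : IsEndCut Γ A) : ∃ C, IsOptimalCut Γ C := by
  obtain ⟨B, hB⟩ := exists_isMinCut h
  obtain ⟨C, hC, hCk⟩ := Nat.sInf_mem (⟨_, B, hB, rfl⟩ :
    (crossingNumber Γ '' {B | IsMinCut Γ B}).Nonempty)
  exact ⟨C, hC, fun B hB => hCk ▸ Nat.sInf_le ⟨B, hB, rfl⟩⟩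

theorem IsConnectedIn.exists_mem_endpoints (hD : IsConnectedIn Γ D) (h : (D ∩ C).Nonempty)
    (h' : (D ∩ Cᶜ).Nonempty) : ∃ u ∈ D, u ∈ endpoints (cobound Γ C) := by
  obtain ⟨x, hxD, hxC⟩ := h
  obtain ⟨y, hyD, hyC⟩ := h'
  obtain ⟨u, v, huv, huD, -, huC, hvC⟩ := (hD hxD hyD).exists_adj_mem_notMem hxC hyC
  exact ⟨u, huD, _, mk_mem_cobound huv huC hvC, Sym2.mem_mk_left u v⟩

/-- A minimal cut crossing `C` separates two endpoints of edges of the coboundary of `C`. -/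
theorem finite_crossingCuts (hΓ : Γ.Preconnected) [Γ.LocallyFinite] (hC : IsCut Γ C) :
    (crossingCuts Γ C).Finite := by
  have hE := finite_endpoints hC
  refine (hE.biUnion fun p _ => hE.biUnion fun q _ =>
    finite_setOf_isMinCut_mem_notMem hΓ p q).subset ?_
  rintro D ⟨hD, hCD⟩
  obtain ⟨hCD₁, hCD₂, hCD₃, hCD₄⟩ := not_nested_iff.mp hCD
  obtain ⟨p, hpD, hp⟩ := (hD.isConnectedIn hΓ).exists_mem_endpoints (C := C)
    (inter_comm C D ▸ hCD₁) (inter_comm Cᶜ D ▸ hCD₃)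
  obtain ⟨q, hqD, hq⟩ := (hD.compl.isConnectedIn hΓ).exists_mem_endpoints (C := C)
    (inter_comm C Dᶜ ▸ hCD₂) (inter_comm Cᶜ Dᶜ ▸ hCD₄)
  exact mem_biUnion hp (mem_biUnion hq ⟨hD, hpD, hqD⟩)

theorem nested_of_notMem_crossingCuts (hB : IsMinCut Γ B) (h : B ∉ crossingCuts Γ A) :
    Nested A B :=
  not_not.mp fun hAB => h ⟨hB, hAB⟩

theorem crossingCuts_inter_union_subset (hCD : ¬ Nested C D) :
    crossingCuts Γ (C ∩ D) ∪ crossingCuts Γ (Cᶜ ∩ Dᶜ) ⊆ crossingCuts Γ C ∪ crossingCuts Γ D := by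
  have hCD' : ¬ Nested Cᶜ Dᶜ := by rwa [nested_compl_left_iff, nested_compl_right_iff]
  rintro F (⟨hF, hPF⟩ | ⟨hF, hQF⟩) <;> by_contra hout <;> rw [mem_union, not_or] at hout
  · exact hPF (.inter_of_not_nested hCD (nested_of_notMem_crossingCuts hF hout.1)
      (nested_of_notMem_crossingCuts hF hout.2))
  · exact hQF (.inter_of_not_nested hCD' (nested_of_notMem_crossingCuts hF hout.1).compl_left
      (nested_of_notMem_crossingCuts hF hout.2).compl_left)

theorem crossingCuts_inter_inter_subset :
    crossingCuts Γ (C ∩ D) ∩ crossingCuts Γ (Cᶜ ∩ Dᶜ) ⊆ crossingCuts Γ C ∩ crossingCuts Γ D := by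
  rintro F ⟨⟨hF, hPF⟩, -, hQF⟩
  refine ⟨⟨hF, fun hCF => ?_⟩, ⟨hF, fun hDF => ?_⟩⟩
  · exact (hCF.inter_or_compl_inter D).elim hPF hQF
  · rw [inter_comm C] at hPF
    rw [inter_comm Cᶜ] at hQF
    exact (hDF.inter_or_compl_inter C).elim hPF hQF

/-- Two crossing minimal cuts `C`, `D` cross both corner cuts, which in turn cross no minimal cut
that neither `C` nor `D` crosses; so passing to the corners lowers the total crossing number. -/
theorem crossingNumber_inter_add_lt (hΓ : Γ.Preconnected) [Γ.LocallyFinite] (hC : IsMinCut Γ C)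
    (hD : IsMinCut Γ D) (hP : IsMinCut Γ (C ∩ D)) (hQ : IsMinCut Γ (Cᶜ ∩ Dᶜ))
    (hCD : ¬ Nested C D) :
    crossingNumber Γ (C ∩ D) + crossingNumber Γ (Cᶜ ∩ Dᶜ) <
      crossingNumber Γ C + crossingNumber Γ D := by
  have hfC := finite_crossingCuts hΓ hC.1.1
  have hfD := finite_crossingCuts hΓ hD.1.1
  have hfP := finite_crossingCuts hΓ hP.1.1
  have hfQ := finite_crossingCuts hΓ hQ.1.1
  have hCnot : C ∉ crossingCuts Γ (C ∩ D) ∪ crossingCuts Γ (Cᶜ ∩ Dᶜ) := by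
    rintro (⟨-, h⟩ | ⟨-, h⟩)
    exacts [h (.inr (.inl inter_subset_left)), h (.inl inter_subset_left)]
  have hDnot : D ∉ crossingCuts Γ (C ∩ D) ∪ crossingCuts Γ (Cᶜ ∩ Dᶜ) := by
    rintro (⟨-, h⟩ | ⟨-, h⟩)
    exacts [h (.inr (.inl inter_subset_right)), h (.inl inter_subset_right)]
  have hCD_ne : C ≠ D := fun h => hCD (h ▸ .refl C)
  have hunion : (crossingCuts Γ (C ∩ D) ∪ crossingCuts Γ (Cᶜ ∩ Dᶜ)).ncard + 2 ≤
      (crossingCuts Γ C ∪ crossingCuts Γ D).ncard := by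
    have hsub : insert C (insert D (crossingCuts Γ (C ∩ D) ∪ crossingCuts Γ (Cᶜ ∩ Dᶜ))) ⊆
        crossingCuts Γ C ∪ crossingCuts Γ D := by
      refine insert_subset (.inr ⟨hC, fun h => hCD h.symm⟩)
        (insert_subset (.inl ⟨hD, hCD⟩) (crossingCuts_inter_union_subset hCD))
    have := ncard_le_ncard hsub (hfC.union hfD)
    rwa [ncard_insert_of_notMem (by rintro (h | h); exacts [hCD_ne h, hCnot h])
      ((hfP.union hfQ).insert D), ncard_insert_of_notMem hDnot (hfP.union hfQ)] at this
  have hinter := ncard_le_ncard (crossingCuts_inter_inter_subset (Γ := Γ) (C := C) (D := D))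
    (hfC.inter_of_left _)
  have := ncard_union_add_ncard_inter _ _ hfP hfQ
  have := ncard_union_add_ncard_inter _ _ hfC hfD
  simp only [crossingNumber]
  omega

theorem IsOptimalCut.nested_of_infinite_corners (hΓ : Γ.Preconnected) [Γ.LocallyFinite]
    (hC : IsOptimalCut Γ C) (hD : IsOptimalCut Γ D) (hP : (C ∩ D).Infinite)
    (hQ : (Cᶜ ∩ Dᶜ).Infinite) : Nested C D := by
  by_contra hCD
  obtain ⟨hPmin, hCDmin⟩ := hC.1.inter_and_union hD.1 hP hQ
  have hQmin : IsMinCut Γ (Cᶜ ∩ Dᶜ) := compl_union C D ▸ hCDmin.compl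
  have := crossingNumber_inter_add_lt hΓ hC.1 hD.1 hPmin hQmin hCD
  have := hC.2 _ hPmin
  have := hD.2 _ hQmin
  omega

theorem IsOptimalCut.nested (hΓ : Γ.Preconnected) [Γ.LocallyFinite] (hC : IsOptimalCut Γ C)
    (hD : IsOptimalCut Γ D) : Nested C D := by
  rcases infinite_opposite_corners hC.1.1.2.1 hC.1.1.2.2 hD.1.1.2.1 hD.1.1.2.2 with h | h
  · exact hC.nested_of_infinite_corners hΓ hD h.1 h.2
  · refine nested_compl_right_iff.mp (hC.nested_of_infinite_corners hΓ hD.compl h.1 ?_)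
    rw [compl_compl]
    exact h.2

end OptimalCuts

section Invariance

variable {G : Type*} [Group G] [MulAction G V]

theorem nested_smul_iff (g : G) : Nested (g • A) (g • B) ↔ Nested A B := by
  simp only [Nested, ← smul_set_compl, smul_set_subset_smul_set_iff]

variable (hadj : ∀ (g : G) ⦃u v : V⦄, Γ.Adj u v → Γ.Adj (g • u) (g • v))
include hadj

theorem cobound_smul (g : G) (A : Set V) :
    cobound Γ (g • A) = Sym2.map (g • ·) '' cobound Γ A := by
  have key : ∀ (g : G) (A : Set V) (u v : V), s(u, v) ∈ cobound Γ A →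
      s(g • u, g • v) ∈ cobound Γ (g • A) := by
    intro g A u v h
    rw [mem_cobound, smul_mem_smul_set_iff, smul_mem_smul_set_iff] at *
    exact ⟨hadj g h.1, h.2⟩
  ext e
  constructor
  · intro h
    induction e using Sym2.ind with
    | h u v =>
      refine ⟨s(g⁻¹ • u, g⁻¹ • v), ?_, by simp⟩
      simpa using key g⁻¹ _ u v h
  · rintro ⟨e, he, rfl⟩
    induction e using Sym2.ind with
    | h a b => exact key g A a b he

theorem ncard_cobound_smul (g : G) (A : Set V) :
    (cobound Γ (g • A)).ncard = (cobound Γ A).ncard := by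
  rw [cobound_smul hadj]
  exact ncard_image_of_injective _ (Sym2.map.injective (MulAction.injective g))

theorem IsMinCut.smul (g : G) (h : IsMinCut Γ A) : IsMinCut Γ (g • A) := by
  refine ⟨⟨?_, h.1.2.1.smul_set, ?_⟩, ncard_cobound_smul hadj g A ▸ h.2⟩
  · rw [IsCut, cobound_smul hadj]
    exact h.1.1.image _
  · rw [← smul_set_compl]
    exact h.1.2.2.smul_set

theorem isMinCut_smul_iff (g : G) : IsMinCut Γ (g • A) ↔ IsMinCut Γ A :=
  ⟨fun h => inv_smul_smul g A ▸ h.smul hadj g⁻¹, IsMinCut.smul hadj g⟩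

theorem crossingCuts_smul (g : G) (A : Set V) :
    crossingCuts Γ (g • A) = g • crossingCuts Γ A := by
  ext B
  rw [mem_smul_set_iff_inv_smul_mem]
  simp only [crossingCuts, mem_ofPred_eq, ← nested_smul_iff g⁻¹ (A := g • A), inv_smul_smul,
    isMinCut_smul_iff hadj]

theorem IsOptimalCut.smul (g : G) (h : IsOptimalCut Γ A) : IsOptimalCut Γ (g • A) := by
  have hcn : ∀ (g : G) (B : Set V), crossingNumber Γ (g • B) = crossingNumber Γ B :=
    fun g B => by rw [crossingNumber, crossingCuts_smul hadj, ncard_smul_set, crossingNumber]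
  refine ⟨h.1.smul hadj g, fun B hB => ?_⟩
  rw [hcn, ← hcn g⁻¹ B]
  exact h.2 _ (hB.smul hadj g⁻¹)

end Invariance

theorem Set.compl_ssubset_compl_iff : Aᶜ ⊂ Bᶜ ↔ B ⊂ A := compl_lt_compl_iff_lt

theorem Set.ssubset_compl_comm : A ⊂ Bᶜ ↔ B ⊂ Aᶜ := by
  rw [← compl_ssubset_compl_iff, compl_compl]

theorem Set.smul_set_ssubset_smul_set_iff {G : Type*} [Group G] [MulAction G V] {g : G} :
    g • A ⊂ g • B ↔ A ⊂ B := by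
  simp only [ssubset_def, smul_set_subset_smul_set_iff]

section TreeSets

variable {𝓔 : Set (Set V)}

structure IsTreeSet (𝓔 : Set (Set V)) : Prop where
  compl_mem : ∀ ⦃C⦄, C ∈ 𝓔 → Cᶜ ∈ 𝓔
  nonempty : ∀ ⦃C⦄, C ∈ 𝓔 → C.Nonempty
  nested : ∀ ⦃C⦄, C ∈ 𝓔 → ∀ ⦃D⦄, D ∈ 𝓔 → Nested C D
  finite_interval : ∀ ⦃C⦄, C ∈ 𝓔 → ∀ ⦃D⦄, D ∈ 𝓔 → {E ∈ 𝓔 | C ⊆ E ∧ E ⊆ D}.Finite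

/-- `C ~ D` iff `C = D` or `Dᶜ` covers `C` in `𝓔`. The classes of `~` are the vertices of the
tree of `𝓔`, and each `C ∈ 𝓔` is an edge, from the class of `C` to the class of `Cᶜ`. -/
def SameVertex (𝓔 : Set (Set V)) (C D : Set V) : Prop :=
  C = D ∨ C ⊂ Dᶜ ∧ ∀ E ∈ 𝓔, C ⊂ E → ¬ E ⊂ Dᶜ

def TreeVertex (𝓔 : Set (Set V)) : Type _ := Quot fun C D : 𝓔 => SameVertex 𝓔 C D

def TreeVertex.mk (C : 𝓔) : TreeVertex 𝓔 := Quot.mk _ C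

def treeGraph (𝓔 : Set (Set V)) : SimpleGraph (TreeVertex 𝓔) :=
  SimpleGraph.fromRel fun x y => ∃ C D : 𝓔, (D : Set V) = (C : Set V)ᶜ ∧
    x = TreeVertex.mk C ∧ y = TreeVertex.mk D

/-- The vertices on the `Cᶜ` side of the edge `C`. -/
def FarSide (C : Set V) (x : TreeVertex 𝓔) : Prop :=
  ∃ F : 𝓔, x = TreeVertex.mk F ∧ ((F : Set V) ⊂ C ∨ Cᶜ ⊆ F)

namespace IsTreeSet

variable (h : IsTreeSet 𝓔)
include h

def compl (C : 𝓔) : 𝓔 := ⟨(C : Set V)ᶜ, h.compl_mem C.2⟩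

@[simp] theorem coe_compl (C : 𝓔) : (h.compl C : Set V) = (C : Set V)ᶜ := rfl

theorem compl_compl (C : 𝓔) : h.compl (h.compl C) = C := Subtype.ext (_root_.compl_compl _)

theorem not_subset_compl_of_subset (hC : C ∈ 𝓔) (hCA : C ⊆ A) : ¬ C ⊆ Aᶜ := fun hCA' => by
  obtain ⟨x, hx⟩ := h.nonempty hC
  exact hCA' hx (hCA hx)

theorem sameVertex_symm (hCD : SameVertex 𝓔 C D) : SameVertex 𝓔 D C := by
  rcases hCD with rfl | ⟨hCD, hcov⟩
  · exact .inl rfl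
  refine .inr ⟨ssubset_compl_comm.mp hCD, fun E hE hDE hEC => ?_⟩
  exact hcov Eᶜ (h.compl_mem hE) (ssubset_compl_comm.mp hEC) (compl_ssubset_compl_iff.mpr hDE)

theorem ssubset_compl_of_covers (hC : C ∈ 𝓔) (hD : D ∈ 𝓔) (hF : F ∈ 𝓔)
    (hCD : C ⊂ Dᶜ) (hcovCD : ∀ E ∈ 𝓔, C ⊂ E → ¬ E ⊂ Dᶜ)
    (hDF : D ⊂ Fᶜ) (hcovDF : ∀ E ∈ 𝓔, D ⊂ E → ¬ E ⊂ Fᶜ) (hCF : C ≠ F) : C ⊂ Fᶜ := by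
  rcases h.nested hC hF with hCF' | hCF' | hFC | hFC
  · refine ssubset_of_subset_of_ne hCF' fun hCF'' => ?_
    exact h.not_subset_compl_of_subset hD (hCF'' ▸ hDF.subset) (ssubset_compl_comm.mp hCD).subset
  · exact absurd (ssubset_compl_comm.mp hDF) (hcovCD F hF (ssubset_of_subset_of_ne hCF' hCF))
  · exact absurd (compl_ssubset_compl_iff.mpr (ssubset_of_subset_of_ne hFC hCF.symm))
      (hcovDF Cᶜ (h.compl_mem hC) (ssubset_compl_comm.mp hCD))
  · exact (h.not_subset_compl_of_subset hD (hDF.subset.trans hFC)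
      (ssubset_compl_comm.mp hCD).subset).elim

theorem covers_of_covers (hC : C ∈ 𝓔) (hD : D ∈ 𝓔) (hF : F ∈ 𝓔)
    (hCD : C ⊂ Dᶜ) (hcovCD : ∀ E ∈ 𝓔, C ⊂ E → ¬ E ⊂ Dᶜ)
    (hDF : D ⊂ Fᶜ) (hcovDF : ∀ E ∈ 𝓔, D ⊂ E → ¬ E ⊂ Fᶜ) :
    ∀ E ∈ 𝓔, C ⊂ E → ¬ E ⊂ Fᶜ := by
  intro E hE hCE hEF
  rcases h.nested hE hD with hED | hED | hDE | hDE
  · obtain rfl | hED := hED.eq_or_ssubset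
    · exact h.not_subset_compl_of_subset hF subset_rfl
        ((compl_ssubset_compl_iff.mp hEF).subset.trans hDF.subset)
    · exact hcovCD E hE hCE hED
  · exact h.not_subset_compl_of_subset hC (hCE.subset.trans hED) hCD.subset
  · obtain rfl | hDE := hDE.eq_or_ssubset
    · exact h.not_subset_compl_of_subset hC hCE.subset hCD.subset
    · exact hcovDF E hE hDE hEF
  · obtain ⟨x, hx⟩ := h.nonempty hF
    by_cases hxD : x ∈ D
    · exact hDF.subset hxD hx
    · exact hEF.subset (hDE hxD) hx

theorem sameVertex_trans (hC : C ∈ 𝓔) (hD : D ∈ 𝓔) (hF : F ∈ 𝓔) (hCD : SameVertex 𝓔 C D)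
    (hDF : SameVertex 𝓔 D F) : SameVertex 𝓔 C F := by
  rcases hCD with rfl | ⟨hCD, hcovCD⟩
  · exact hDF
  rcases hDF with rfl | ⟨hDF, hcovDF⟩
  · exact .inr ⟨hCD, hcovCD⟩
  by_cases hCF : C = F
  · exact .inl hCF
  exact .inr ⟨h.ssubset_compl_of_covers hC hD hF hCD hcovCD hDF hcovDF hCF,
    h.covers_of_covers hC hD hF hCD hcovCD hDF hcovDF⟩

theorem equivalence_sameVertex : Equivalence fun C D : 𝓔 => SameVertex 𝓔 C D :=
  ⟨fun _ => .inl rfl, h.sameVertex_symm, fun {C D F} => h.sameVertex_trans C.2 D.2 F.2⟩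

theorem mk_eq_mk_iff {C D : 𝓔} :
    TreeVertex.mk C = TreeVertex.mk D ↔ SameVertex 𝓔 C D :=
  ⟨fun hCD => h.equivalence_sameVertex.eqvGen_iff.mp (Quot.eqvGen_exact hCD),
    fun hCD => Quot.sound hCD⟩

theorem mk_ne_mk_compl (C : 𝓔) : TreeVertex.mk C ≠ TreeVertex.mk (h.compl C) := by
  rw [ne_eq, h.mk_eq_mk_iff]
  rintro (hC | ⟨hC, -⟩)
  · exact h.not_subset_compl_of_subset C.2 subset_rfl hC.le
  · exact hC.ne (_root_.compl_compl _).symm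

theorem adj_mk_compl (C : 𝓔) : (treeGraph 𝓔).Adj (TreeVertex.mk C) (TreeVertex.mk (h.compl C)) :=
  (SimpleGraph.fromRel_adj _ _ _).mpr ⟨h.mk_ne_mk_compl C, .inl ⟨C, h.compl C, rfl, rfl, rfl⟩⟩

theorem exists_eq_mk_of_adj {x y : TreeVertex 𝓔} (hxy : (treeGraph 𝓔).Adj x y) :
    ∃ C : 𝓔, x = TreeVertex.mk C ∧ y = TreeVertex.mk (h.compl C) := by
  obtain ⟨-, ⟨C, D, hDC, rfl, rfl⟩ | ⟨C, D, hDC, rfl, rfl⟩⟩ :=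
    (SimpleGraph.fromRel_adj _ _ _).mp hxy
  · exact ⟨C, rfl, congrArg _ (Subtype.ext hDC)⟩
  · refine ⟨D, rfl, congrArg _ (Subtype.ext ?_)⟩
    rw [coe_compl, hDC, _root_.compl_compl]

theorem reachable_mk_compl (C : 𝓔) :
    (treeGraph 𝓔).Reachable (TreeVertex.mk C) (TreeVertex.mk (h.compl C)) :=
  (h.adj_mk_compl C).reachable

/-- By induction on the number of elements of `𝓔` between `C` and `Dᶜ`: if one, `E`, lies
strictly between, go from `C` to `Eᶜ`, cross the edge `Eᶜ`, and go on from `E` to `D`. -/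
theorem reachable_of_subset_compl {C D : 𝓔} (hCD : (C : Set V) ⊆ (D : Set V)ᶜ) :
    (treeGraph 𝓔).Reachable (TreeVertex.mk C) (TreeVertex.mk D) := by
  induction hn : {E ∈ 𝓔 | (C : Set V) ⊆ E ∧ E ⊆ (D : Set V)ᶜ}.ncard using Nat.strong_induction_on
    generalizing C D with
  | _ n ih =>
  obtain hCD' | hCD' := hCD.eq_or_ssubset
  · rw [show C = h.compl D from Subtype.ext hCD']
    exact (h.reachable_mk_compl D).symm
  by_cases hcov : ∀ E ∈ 𝓔, (C : Set V) ⊂ E → ¬ E ⊂ (D : Set V)ᶜ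
  · rw [h.mk_eq_mk_iff.mpr (.inr ⟨hCD', hcov⟩)]
  push Not at hcov
  obtain ⟨E, hE, hCE, hED⟩ := hcov
  have hfin := h.finite_interval C.2 (h.compl_mem D.2)
  have hDmem : (D : Set V)ᶜ ∈ {F ∈ 𝓔 | (C : Set V) ⊆ F ∧ F ⊆ (D : Set V)ᶜ} :=
    ⟨h.compl_mem D.2, hCD, subset_rfl⟩
  have hCmem : (C : Set V) ∈ {F ∈ 𝓔 | (C : Set V) ⊆ F ∧ F ⊆ (D : Set V)ᶜ} :=
    ⟨C.2, subset_rfl, hCD⟩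
  have hlt₁ : {F ∈ 𝓔 | (C : Set V) ⊆ F ∧ F ⊆ ((h.compl ⟨E, hE⟩ : Set V))ᶜ}.ncard < n := by
    simp only [coe_compl, _root_.compl_compl]
    refine hn ▸ ncard_lt_ncard ⟨fun F hF => ⟨hF.1, hF.2.1, hF.2.2.trans hED.subset⟩,
      fun hsub => hED.not_subset (hsub hDmem).2.2⟩ hfin
  have hlt₂ : {F ∈ 𝓔 | E ⊆ F ∧ F ⊆ (D : Set V)ᶜ}.ncard < n :=
    hn ▸ ncard_lt_ncard ⟨fun F hF => ⟨hF.1, hCE.subset.trans hF.2.1, hF.2.2⟩,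
      fun hsub => hCE.not_subset (hsub hCmem).2.1⟩ hfin
  have hCE' : (C : Set V) ⊆ ((h.compl ⟨E, hE⟩ : Set V))ᶜ := by
    simpa only [coe_compl, _root_.compl_compl] using hCE.subset
  exact (ih _ hlt₁ hCE' rfl).trans
    ((h.reachable_mk_compl ⟨E, hE⟩).symm.trans (ih _ hlt₂ (C := ⟨E, hE⟩) hED.subset rfl))

theorem preconnected : (treeGraph 𝓔).Preconnected := by
  rintro ⟨C⟩ ⟨D⟩
  change (treeGraph 𝓔).Reachable (TreeVertex.mk C) (TreeVertex.mk D)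
  have hC := h.reachable_mk_compl C
  have hD := (h.reachable_mk_compl D).symm
  rcases h.nested C.2 D.2 with hCD | hCD | hCD | hCD
  · exact h.reachable_of_subset_compl hCD
  · exact (h.reachable_of_subset_compl (D := h.compl D)
      (by rwa [coe_compl, _root_.compl_compl])).trans hD
  · exact hC.trans (h.reachable_of_subset_compl (compl_subset_compl.mpr hCD))
  · exact hC.trans ((h.reachable_of_subset_compl (C := h.compl C) (D := h.compl D)
      (by rwa [coe_compl, coe_compl, _root_.compl_compl, compl_subset_comm])).trans hD)

theorem not_farSide_mk (C : 𝓔) : ¬ FarSide C (TreeVertex.mk C) := by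
  rintro ⟨F, hF, hFC⟩
  rcases h.mk_eq_mk_iff.mp hF.symm with hFC' | ⟨hF', -⟩
  · rw [hFC'] at hFC
    rcases hFC with hFC | hFC
    · exact hFC.ne rfl
    · exact h.not_subset_compl_of_subset (h.compl_mem C.2) hFC subset_rfl
  · rcases hFC with hFC | hFC
    · exact h.not_subset_compl_of_subset F.2 hFC.subset hF'.subset
    · exact hF'.not_subset hFC

theorem ssubset_or_compl_ssubset_of_farSide {C D : 𝓔} (hDC : (D : Set V) ≠ C)
    (hDC' : (D : Set V) ≠ (C : Set V)ᶜ) (hD : FarSide C (TreeVertex.mk D)) :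
    (D : Set V) ⊂ C ∨ (C : Set V)ᶜ ⊂ D := by
  obtain ⟨F, hF, hFC⟩ := hD
  rcases h.mk_eq_mk_iff.mp hF with hDF | ⟨hDF, hcov⟩
  · rw [hDF]
    exact hFC.imp id fun hCF => ssubset_of_subset_of_ne hCF (hDF ▸ hDC'.symm)
  rcases h.nested D.2 C.2 with hDC'' | hDC'' | hCD | hCD
  · have hDC'' := ssubset_of_subset_of_ne hDC'' hDC'
    rcases hFC with hFC | hFC
    · exact (hcov _ (h.compl_mem C.2) hDC'' (compl_ssubset_compl_iff.mpr hFC)).elim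
    · exact (h.not_subset_compl_of_subset D.2 (hDC''.subset.trans hFC) hDF.subset).elim
  · exact .inl (ssubset_of_subset_of_ne hDC'' hDC)
  · have hCD := ssubset_of_subset_of_ne hCD (Ne.symm hDC)
    rcases hFC with hFC | hFC
    · exact (h.not_subset_compl_of_subset F.2 subset_rfl
        (hFC.subset.trans (hCD.subset.trans hDF.subset))).elim
    · exact (hCD.not_subset (hDF.subset.trans (compl_subset_comm.mp hFC))).elim
  · exact .inr (ssubset_of_subset_of_ne hCD (Ne.symm hDC'))

theorem farSide_mk_compl_of_farSide {C D : 𝓔} (hDC : (D : Set V) ≠ C)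
    (hDC' : (D : Set V) ≠ (C : Set V)ᶜ) (hD : FarSide C (TreeVertex.mk D)) :
    FarSide C (TreeVertex.mk (h.compl D)) := by
  refine ⟨h.compl D, rfl, ?_⟩
  rcases h.ssubset_or_compl_ssubset_of_farSide hDC hDC' hD with hD' | hD'
  · exact .inr (compl_ssubset_compl_iff.mpr hD').subset
  · exact .inl (compl_ssubset_compl_iff.mp (by rwa [coe_compl, _root_.compl_compl]))

theorem farSide_of_adj_of_farSide (C : 𝓔) {x y : TreeVertex 𝓔}
    (hxy : ((treeGraph 𝓔).deleteEdges {s(TreeVertex.mk C, TreeVertex.mk (h.compl C))}).Adj x y)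
    (hx : FarSide C x) : FarSide C y := by
  rw [SimpleGraph.deleteEdges_adj, mem_singleton_iff] at hxy
  obtain ⟨hxy, hne⟩ := hxy
  obtain ⟨D, rfl, rfl⟩ := h.exists_eq_mk_of_adj hxy
  refine h.farSide_mk_compl_of_farSide (fun hDC => hne ?_) (fun hDC => hne ?_) hx
  · rw [Subtype.ext hDC]
  · rw [show D = h.compl C from Subtype.ext hDC, h.compl_compl, Sym2.eq_swap]

theorem isBridge (C : 𝓔) :
    (treeGraph 𝓔).IsBridge s(TreeVertex.mk C, TreeVertex.mk (h.compl C)) := by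
  rw [SimpleGraph.isBridge_iff]
  rintro ⟨p⟩
  have preserve : ∀ {x y} (_ : ((treeGraph 𝓔).deleteEdges
      {s(TreeVertex.mk C, TreeVertex.mk (h.compl C))}).Walk x y), FarSide C y → FarSide C x := by
    intro x y q
    induction q with
    | nil => exact id
    | cons hadj _ ih => exact fun hy => h.farSide_of_adj_of_farSide C hadj.symm (ih hy)
  exact h.not_farSide_mk C (preserve p ⟨h.compl C, rfl, .inr subset_rfl⟩)

theorem isAcyclic : (treeGraph 𝓔).IsAcyclic := by
  rw [SimpleGraph.isAcyclic_iff_forall_adj_isBridge]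
  intro x y hxy
  obtain ⟨C, rfl, rfl⟩ := h.exists_eq_mk_of_adj hxy
  exact h.isBridge C

theorem isTree (hne : 𝓔.Nonempty) : (treeGraph 𝓔).IsTree :=
  have : Nonempty (TreeVertex 𝓔) := ⟨TreeVertex.mk ⟨_, hne.some_mem⟩⟩
  ⟨⟨h.preconnected⟩, h.isAcyclic⟩

theorem eq_of_mk_eq_of_mk_compl_eq {C D : 𝓔}
    (hDC : TreeVertex.mk D = TreeVertex.mk C)
    (hDC' : TreeVertex.mk (h.compl D) = TreeVertex.mk (h.compl C)) : (D : Set V) = C := by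
  rcases h.mk_eq_mk_iff.mp hDC with hDC | ⟨hDC, -⟩
  · exact hDC
  rcases h.mk_eq_mk_iff.mp hDC' with hDC' | ⟨hDC', -⟩
  · exact compl_injective hDC'
  rw [coe_compl, coe_compl, _root_.compl_compl] at hDC'
  exact (hDC'.asymm (ssubset_compl_comm.mp hDC)).elim

end IsTreeSet

section Action

variable {G : Type*} [Group G] [MulAction G V]
  (hsmul : ∀ (g : G) ⦃C : Set V⦄, C ∈ 𝓔 → g • C ∈ 𝓔)
include hsmul

theorem sameVertex_smul (g : G) (hCD : SameVertex 𝓔 C D) : SameVertex 𝓔 (g • C) (g • D) := by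
  rcases hCD with rfl | ⟨hCD, hcov⟩
  · exact .inl rfl
  refine .inr ⟨by rwa [← smul_set_compl, smul_set_ssubset_smul_set_iff], fun E hE hCE hED => ?_⟩
  rw [← smul_inv_smul g E, smul_set_ssubset_smul_set_iff] at hCE
  rw [← smul_inv_smul g E, ← smul_set_compl, smul_set_ssubset_smul_set_iff] at hED
  exact hcov _ (hsmul g⁻¹ hE) hCE hED

def treeSmul (g : G) : TreeVertex 𝓔 → TreeVertex 𝓔 :=
  Quot.map (fun C => ⟨g • (C : Set V), hsmul g C.2⟩) fun _ _ => sameVertex_smul hsmul g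

theorem treeSmul_mk (g : G) (C : 𝓔) :
    treeSmul hsmul g (TreeVertex.mk C) = TreeVertex.mk ⟨g • (C : Set V), hsmul g C.2⟩ := rfl

theorem treeSmul_one (x : TreeVertex 𝓔) : treeSmul hsmul 1 x = x := by
  induction x using Quot.ind with
  | mk C => exact congrArg TreeVertex.mk (Subtype.ext (one_smul G _))

theorem treeSmul_mul (g g' : G) (x : TreeVertex 𝓔) :
    treeSmul hsmul (g * g') x = treeSmul hsmul g (treeSmul hsmul g' x) := by
  induction x using Quot.ind with
  | mk C => exact congrArg TreeVertex.mk (Subtype.ext (mul_smul g g' _))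

theorem treeSmul_injective (g : G) : Function.Injective (treeSmul hsmul g) := fun x y hxy => by
  rw [← treeSmul_one hsmul x, ← treeSmul_one hsmul y, ← inv_mul_cancel g, treeSmul_mul,
    treeSmul_mul, hxy]

theorem treeSmul_adj (g : G) {x y : TreeVertex 𝓔} (hxy : (treeGraph 𝓔).Adj x y) :
    (treeGraph 𝓔).Adj (treeSmul hsmul g x) (treeSmul hsmul g y) := by
  rw [treeGraph, SimpleGraph.fromRel_adj] at hxy ⊢
  refine ⟨(treeSmul_injective hsmul g).ne hxy.1, hxy.2.imp ?_ ?_⟩ <;>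
  · rintro ⟨C, D, hDC, rfl, rfl⟩
    exact ⟨_, _, show g • (D : Set V) = (g • (C : Set V))ᶜ by rw [hDC, smul_set_compl],
      treeSmul_mk hsmul g C, treeSmul_mk hsmul g D⟩

theorem IsTreeSet.smul_eq_or_subset_compl_of_treeSmul_eq (h : IsTreeSet 𝓔) {g : G} {C : 𝓔}
    (hgC : treeSmul hsmul g (TreeVertex.mk C) = TreeVertex.mk C) :
    g • (C : Set V) = C ∨ g • (C : Set V) ⊆ (C : Set V)ᶜ :=
  (h.mk_eq_mk_iff.mp hgC).imp id fun hgC => hgC.1.subset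

theorem IsTreeSet.smul_eq_or_smul_eq_compl_of_fixes_edge (h : IsTreeSet 𝓔) {g : G} {C : 𝓔}
    (hg : (treeSmul hsmul g (TreeVertex.mk C) = TreeVertex.mk C ∧
        treeSmul hsmul g (TreeVertex.mk (h.compl C)) = TreeVertex.mk (h.compl C)) ∨
      (treeSmul hsmul g (TreeVertex.mk C) = TreeVertex.mk (h.compl C) ∧
        treeSmul hsmul g (TreeVertex.mk (h.compl C)) = TreeVertex.mk C)) :
    g • (C : Set V) = C ∨ g • (C : Set V) = (C : Set V)ᶜ := by
  have hcompl : h.compl ⟨g • (C : Set V), hsmul g C.2⟩ =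
      ⟨g • (h.compl C : Set V), hsmul g (h.compl C).2⟩ :=
    Subtype.ext smul_set_compl.symm
  rcases hg with ⟨hg, hg'⟩ | ⟨hg, hg'⟩
  · refine .inl (h.eq_of_mk_eq_of_mk_compl_eq hg ?_)
    rwa [hcompl]
  · refine .inr (h.eq_of_mk_eq_of_mk_compl_eq (C := h.compl C) hg ?_)
    rwa [hcompl, h.compl_compl]

end Action

end TreeSets

section StructureTree

theorem isTreeSet_setOf_isOptimalCut (hΓ : Γ.Preconnected) [Γ.LocallyFinite] :
    IsTreeSet {C | IsOptimalCut Γ C} where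
  compl_mem _ hC := hC.compl
  nonempty _ hC := hC.1.1.2.1.nonempty
  nested _ hC _ hD := hC.nested hΓ hD
  finite_interval C hC D hD := by
    obtain ⟨x, hx⟩ := hC.1.1.2.1.nonempty
    obtain ⟨y, hy⟩ := hD.1.1.2.2.nonempty
    exact (finite_setOf_isMinCut_mem_notMem hΓ x y).subset
      fun E ⟨hE, hCE, hED⟩ => ⟨hE.1, hCE hx, fun hyE => hy (hED hyE)⟩

variable {G : Type*} [Group G] [MulAction G V]

/-- Each such `g` maps a fixed edge of the coboundary of `C` to one of its finitely many
edges. -/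
theorem finite_setOf_smul_eq_or_smul_eq_compl (hΓ : Γ.Preconnected)
    (hadj : ∀ (g : G) ⦃u v : V⦄, Γ.Adj u v → Γ.Adj (g • u) (g • v))
    (hfree : ∀ x : V, Function.Injective fun g : G => g • x) (hC : IsEndCut Γ C) :
    {g : G | g • C = C ∨ g • C = Cᶜ}.Finite := by
  obtain ⟨e, he⟩ := cobound_nonempty hΓ hC.2.1.nonempty hC.2.2.nonempty
  induction e using Sym2.ind with
  | h u v =>
  refine ((finite_endpoints hC.1).preimage (hfree u).injOn).subset fun g hg => ?_
  have hmem : s(g • u, g • v) ∈ cobound Γ C := by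
    have : s(g • u, g • v) ∈ cobound Γ (g • C) := by
      rw [cobound_smul hadj]
      exact ⟨_, he, rfl⟩
    rcases hg with hg | hg <;> rw [hg] at this
    exacts [this, cobound_compl C ▸ this]
  exact ⟨_, hmem, Sym2.mem_mk_left _ _⟩

/-- Otherwise `C` would lie in the orbit of one of its points under its finite stabilizer. -/
theorem exists_smul_ne_and_not_subset_compl [MulAction.IsPretransitive G V] (hC : C.Infinite)
    (hstab : {g : G | g • C = C}.Finite) : ∃ g : G, g • C ≠ C ∧ ¬ g • C ⊆ Cᶜ := by
  by_contra! hfix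
  obtain ⟨c₀, hc₀⟩ := hC.nonempty
  refine hC ((hstab.image (· • c₀)).subset fun c hc => ?_)
  obtain ⟨g, rfl⟩ := MulAction.exists_smul_eq G c₀ c
  refine ⟨g, by_contra fun hg => ?_, rfl⟩
  exact hfix g hg (smul_mem_smul_set hc₀) hc

end StructureTree

section Cayley

variable {G : Type*} [Group G] {S : Finset G}

theorem cayley_adj_smul (g : G) {x y : G} (h : (cayley S).Adj x y) :
    (cayley S).Adj (g • x) (g • y) := by
  obtain ⟨hne, s, hs, hxy⟩ := h
  refine ⟨fun h => hne (smul_left_cancel g h), s, hs, ?_⟩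
  rcases hxy with rfl | rfl
  exacts [.inl (mul_assoc g x s).symm, .inr (mul_assoc g y s).symm]

theorem cayley_preconnected (hgen : Subgroup.closure (S : Set G) = ⊤) :
    (cayley S).Preconnected := by
  let mulLeft (a : G) : cayley S →g cayley S := ⟨(a * ·), cayley_adj_smul a⟩
  have hreach : ∀ x, (cayley S).Reachable 1 x := fun x => by
    induction (hgen ▸ Subgroup.mem_top x : x ∈ Subgroup.closure (S : Set G))
      using Subgroup.closure_induction with
    | mem s hs =>
      by_cases h1 : s = 1
      · rw [h1]
      · exact SimpleGraph.Adj.reachable ⟨Ne.symm h1, s, hs, .inl (one_mul s).symm⟩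
    | one => rfl
    | mul a b _ _ ha hb => exact ha.trans (by simpa [mulLeft] using hb.map (mulLeft a))
    | inv a _ ha => simpa [mulLeft] using (ha.map (mulLeft a⁻¹)).symm
  intro x y
  simpa [mulLeft] using (hreach (x⁻¹ * y)).map (mulLeft x)

theorem finite_neighborSet_cayley (x : G) : ((cayley S).neighborSet x).Finite := by
  refine (((S.finite_toSet).image (x * ·)).union ((S.finite_toSet).image (x * ·⁻¹))).subset ?_
  rintro y ⟨-, s, hs, rfl | rfl⟩
  · exact .inl ⟨s, hs, rfl⟩
  · exact .inr ⟨s, hs, by group⟩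

noncomputable instance : (cayley S).LocallyFinite := fun x => (finite_neighborSet_cayley x).fintype

end Cayley

theorem IsRay.infinite_of_eventually_mem {r : ℕ → V} (hr : IsRay Γ r) (hA : ∃ N, ∀ n ≥ N, r n ∈ A) :
    A.Infinite := by
  obtain ⟨N, hN⟩ := hA
  exact ((Ici_infinite N).image hr.inj.injOn).mono (image_subset_iff.mpr fun n hn => hN n hn)

/-- Stallings: a finitely generated group whose Cayley graph has more than
one end (two rays separated by a cut) acts non-trivially on a tree with finite edge
stabilizers. -/
theorem stallings {G : Type u} [Group G] (S : Finset G)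
    (hgen : Subgroup.closure (S : Set G) = ⊤)
    (hends : ∃ A : Set G, IsCut (cayley S) A ∧
      ∃ r r' : ℕ → G, IsRay (cayley S) r ∧ IsRay (cayley S) r' ∧
        (∃ N, ∀ n ≥ N, r n ∈ A) ∧ (∃ N, ∀ n ≥ N, r' n ∉ A)) :
    ∃ (W : Type u) (T : SimpleGraph W) (act : G → W → W),
      T.IsTree ∧
      (∀ w, act 1 w = w) ∧
      (∀ g h w, act (g * h) w = act g (act h w)) ∧
      (∀ g u v, T.Adj u v → T.Adj (act g u) (act g v)) ∧
      (¬ ∃ w : W, ∀ g : G, act g w = w) ∧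
      (∀ u v : W, T.Adj u v →
        {g : G | (act g u = u ∧ act g v = v) ∨ (act g u = v ∧ act g v = u)}.Finite) := by
  obtain ⟨A, hAcut, r, r', hr, hr', hrA, hr'A⟩ := hends
  have hΓ := cayley_preconnected hgen
  have h𝓔 := isTreeSet_setOf_isOptimalCut hΓ
  have hsmul (g : G) ⦃C : Set G⦄ (hC : C ∈ {C | IsOptimalCut (cayley S) C}) :
      g • C ∈ {C | IsOptimalCut (cayley S) C} :=
    IsOptimalCut.smul cayley_adj_smul g hC
  have hstab (C : {C | IsOptimalCut (cayley S) C}) :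
      {g : G | g • (C : Set G) = C ∨ g • (C : Set G) = (C : Set G)ᶜ}.Finite :=
    finite_setOf_smul_eq_or_smul_eq_compl hΓ cayley_adj_smul mul_left_injective C.2.1.1
  obtain ⟨C₀, hC₀⟩ := exists_isOptimalCut
    ⟨hAcut, hr.infinite_of_eventually_mem hrA, hr'.infinite_of_eventually_mem hr'A⟩
  refine ⟨_, treeGraph _, treeSmul hsmul, h𝓔.isTree ⟨C₀, hC₀⟩, treeSmul_one hsmul,
    treeSmul_mul hsmul, fun g _ _ => treeSmul_adj hsmul g, ?_, ?_⟩
  · rintro ⟨⟨C⟩, hfix⟩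
    obtain ⟨g, hgC, hgC'⟩ := exists_smul_ne_and_not_subset_compl C.2.1.1.2.1
      ((hstab C).subset fun g hg => .inl hg)
    exact (h𝓔.smul_eq_or_subset_compl_of_treeSmul_eq hsmul (hfix g)).elim hgC hgC'
  · intro x y hxy
    obtain ⟨C, rfl, rfl⟩ := h𝓔.exists_eq_mk_of_adj hxy
    exact (hstab C).subset fun g hg => h𝓔.smul_eq_or_smul_eq_compl_of_fixes_edge hsmul hg
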